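/- arXiv:2201.03641 — 4 statements merged into one kernel-verified Lean document; each statement's English description precedes it below -/
import Mathlib

section
/- Let ρ be a trace with last index n = |ρ| − 1, I an interval with ub(I) < n, and φ, φ_left, φ_right MTL formulas such that φ_left holds in ρ exactly at lb(I) and ρ ⊨_{ub(I)+1} φ_right. Then ρ ⊨_{ub(I)+1} (φ_right → 𝒴(SinceInclusiveOptional(φ, φ_left))) if and only if ρ ⊨ₙ Historically_{[n−ub(I), n−lb(I)]} φ. -/
namespace FRET

inductive MTL (α : Type) : Type where
  | tt | ff
  | atom (p : α)
  | neg (φ : MTL α)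
  | conj (φ ψ : MTL α)
  | disj (φ ψ : MTL α)
  | imp (φ ψ : MTL α)
  | prev (φ : MTL α)
  | once (l : ℕ) (u : ℕ∞) (φ : MTL α)
  | hist (l : ℕ) (u : ℕ∞) (φ : MTL α)
  | since (l : ℕ) (u : ℕ∞) (φ₁ φ₂ : MTL α)

variable {α : Type}

/-- Past-time MTL satisfaction on finite traces (states are sets of atoms). -/
def Sat (ρ : List (Set α)) : MTL α → ℕ → Prop
  | .tt, _ => True
  | .ff, _ => False
  | .atom p, t => p ∈ ρ.getD t ∅
  | .neg φ, t => ¬ Sat ρ φ t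
  | .conj φ ψ, t => Sat ρ φ t ∧ Sat ρ ψ t
  | .disj φ ψ, t => Sat ρ φ t ∨ Sat ρ ψ t
  | .imp φ ψ, t => Sat ρ φ t → Sat ρ ψ t
  | .prev φ, t => t ≠ 0 ∧ Sat ρ φ (t - 1)
  | .once l u φ, t => ∃ t₀ ≤ t, l ≤ t - t₀ ∧ ((t - t₀ : ℕ) : ℕ∞) ≤ u ∧ Sat ρ φ t₀
  | .hist l u φ, t => ∀ t₀ ≤ t, l ≤ t - t₀ → ((t - t₀ : ℕ) : ℕ∞) ≤ u → Sat ρ φ t₀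
  | .since l u φ₁ φ₂, t => ∃ t₀ ≤ t, l ≤ t - t₀ ∧ ((t - t₀ : ℕ) : ℕ∞) ≤ u ∧ Sat ρ φ₂ t₀ ∧
      ∀ t₁, t₀ < t₁ → t₁ ≤ t → Sat ρ φ₁ t₁

/-- Unbounded once. -/
def onceU (φ : MTL α) : MTL α := .once 0 ⊤ φ
/-- Unbounded historically. -/
def histU (φ : MTL α) : MTL α := .hist 0 ⊤ φ
/-- Unbounded since. -/
def sinceU (φ₁ φ₂ : MTL α) : MTL α := .since 0 ⊤ φ₁ φ₂
/-- Since inclusive required. -/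
def sir (φ₁ φ₂ : MTL α) : MTL α := sinceU φ₁ (.conj φ₁ φ₂)
/-- Since inclusive optional. -/
def sio (φ₁ φ₂ : MTL α) : MTL α := .imp (onceU φ₂) (sir φ₁ φ₂)
/-- m-fold previous: 𝒴^m φ = Once_[m,m] φ. -/
def yPow (m : ℕ) (φ : MTL α) : MTL α := .once m (m : ℕ∞) φ
/-- First time point. -/
def ftp : MTL α := .neg (.prev .tt)
/-- First state in which mode holds (entry point). -/
def fim (mode : MTL α) : MTL α := .conj mode (.disj ftp (.prev (.neg mode)))
/-- Last state in which mode held (exit point). -/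
def limF (mode : MTL α) : MTL α := .conj (.neg mode) (.prev mode)
/-- First occurrence of fim. -/
def ffim (mode : MTL α) : MTL α := .conj (fim mode) (.disj ftp (.prev (histU (.neg mode))))

/-- Non-temporal (Boolean) formulas. -/
def MTL.isBool : MTL α → Prop
  | .tt => True
  | .ff => True
  | .atom _ => True
  | .neg φ => φ.isBool
  | .conj φ ψ => φ.isBool ∧ ψ.isBool
  | .disj φ ψ => φ.isBool ∧ ψ.isBool
  | .imp φ ψ => φ.isBool ∧ ψ.isBool
  | _ => False

/-- Trigger formula. -/
def triggerFormula (cond φL : MTL α) : MTL α :=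
  .disj (.conj cond (.prev (.neg cond))) (.conj cond φL)

/-- No-triggers formula. -/
def noTriggersFormula (cond φL : MTL α) : MTL α := sir (.neg cond) φL

/-- Triggers of a (non-null) condition in interval I = (lb, ub): indices of I where
cond becomes true from false, plus lb(I) if cond holds there. -/
def Triggers (cond : MTL α) (ρ : List (Set α)) (I : ℕ × ℕ) : Set ℕ :=
  {t | I.1 ≤ t ∧ t ≤ I.2 ∧ Sat ρ cond t ∧ (t = I.1 ∨ ¬ Sat ρ cond (t - 1))}
/-- Base-formula/historically equivalence, non-final interval case:
if φ_left holds exactly at lb(I), φ_right holds at ub(I)+1, and ub(I) < n = |ρ| - 1, then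
φ_right → 𝒴(SinceInclusiveOptional(φ, φ_left)) holds at ub(I)+1 iff
Historically_[n-ub(I), n-lb(I)] φ holds at n. -/
theorem baseform_iff_historically {α : Type} (ρ : List (Set α)) (I : ℕ × ℕ)
    (φ φL φR : MTL α)
    (hI : I.1 ≤ I.2) (hub : I.2 < ρ.length - 1)
    (hL1 : Sat ρ φL I.1) (hL2 : ∀ s, I.1 < s → ¬ Sat ρ φL s)
    (hR : Sat ρ φR (I.2 + 1)) :
    Sat ρ (.imp φR (.prev (sio φ φL))) (I.2 + 1) ↔
      Sat ρ (.hist ((ρ.length - 1) - I.2) (((ρ.length - 1) - I.1 : ℕ) : ℕ∞) φ)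
        (ρ.length - 1) := by
  set n := ρ.length - 1 with hn
  have hI2n : I.2 ≤ n := le_of_lt hub
  have hI1n : I.1 ≤ n := le_trans hI hI2n
  simp only [Sat, sio, sir, sinceU, onceU]
  constructor
  · intro h t₀ ht₀ hl hu
    have hu' : n - t₀ ≤ n - I.1 := by exact_mod_cast hu
    have h1 : I.1 ≤ t₀ := by omega
    have h2 : t₀ ≤ I.2 := by omega
    obtain ⟨-, hsio⟩ := h hR
    simp only [Nat.add_sub_cancel] at hsio
    have honce : Sat ρ (MTL.once 0 ⊤ φL) I.2 := ⟨I.1, hI, Nat.zero_le _, le_top, hL1⟩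
    obtain ⟨t₁, ht₁, -, -, ⟨hφt₁, hφLt₁⟩, hall⟩ := hsio honce
    have ht1 : t₁ ≤ I.1 := by
      by_contra hc
      exact hL2 t₁ (by omega) hφLt₁
    rcases eq_or_lt_of_le (show t₁ ≤ t₀ by omega) with he | hlt
    · exact he ▸ hφt₁
    · exact hall t₀ hlt h2
  · intro h _
    refine ⟨by omega, ?_⟩
    simp only [Nat.add_sub_cancel]
    intro _
    refine ⟨I.1, hI, Nat.zero_le _, le_top, ⟨?_, hL1⟩, ?_⟩
    · exact h I.1 hI1n (by omega) (by exact_mod_cast le_refl (n - I.1))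
    · intro t₁ ha hb
      exact h t₁ (by omega) (by omega)
        (by exact_mod_cast (by omega : n - t₁ ≤ n - I.1))

end FRET
end

section
/- Correctness of the base formula for timing 'always': Let ρ be a trace with last index n, I an interval with ub(I) ≤ n, cond, res Boolean expressions, and φ_left, φ_right MTL formulas with φ_left holding in ρ exactly at lb(I) and (if ub(I) < n) ρ ⊨_{ub(I)+1} φ_right. Then I belongs to the timing semantics of 'always' for (cond, res) in ρ — i.e., either Triggers(cond, ρ, I) = ∅, or for all j ∈ [min(Triggers), ub(I)], ρ ⊨ⱼ res — if and only if: (a) when ub(I) < n, ρ ⊨_{ub(I)+1} φ_right → 𝒴(SinceInclusiveOptional(φ_core, φ_left)); (b) when ub(I) = n, ρ ⊨ₙ SinceInclusiveOptional(φ_core, φ_left); where φ_core = noTriggersFormula(cond, φ_left) ∨ SinceInclusiveRequired(res, triggerFormula(cond, φ_left)). -/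
namespace FRET

variable {α : Type}

/-- Correctness of the base formula for timing 'always'. -/
theorem baseform_correct_always {α : Type} (ρ : List (Set α)) (I : ℕ × ℕ)
    (cond res φL φR : MTL α)
    (hcond : cond.isBool) (hres : res.isBool)
    (hρ : ρ ≠ []) (hI : I.1 ≤ I.2) (hub : I.2 ≤ ρ.length - 1)
    (hL1 : Sat ρ φL I.1) (hL2 : ∀ s, I.1 < s → ¬ Sat ρ φL s)
    (hR : I.2 < ρ.length - 1 → Sat ρ φR (I.2 + 1)) :
    let n := ρ.length - 1
    let φcore := MTL.disj (noTriggersFormula cond φL) (sir res (triggerFormula cond φL))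
    let semAlways :=
      Triggers cond ρ I = ∅ ∨
        ∀ j, sInf (Triggers cond ρ I) ≤ j → j ≤ I.2 → Sat ρ res j
    (I.2 < n → (semAlways ↔ Sat ρ (.imp φR (.prev (sio φcore φL))) (I.2 + 1))) ∧
    (I.2 = n → (semAlways ↔ Sat ρ (sio φcore φL) n)) := by
  obtain ⟨a, b⟩ := I
  dsimp only at hI hub hL1 hL2 hR ⊢
  set φcore := (noTriggersFormula cond φL).disj (sir res (triggerFormula cond φL)) with hφcore
  have memT : ∀ t, t ∈ Triggers cond ρ (a, b) ↔
      (a ≤ t ∧ t ≤ b ∧ Sat ρ cond t ∧ (t = a ∨ ¬ Sat ρ cond (t - 1))) := fun t => Iff.rfl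
  have nocond : ∀ t, t ≤ b → (∀ s ∈ Triggers cond ρ (a, b), t < s) →
      ∀ s, a ≤ s → s ≤ t → ¬ Sat ρ cond s := by
    intro t htb hno s
    induction s using Nat.strong_induction_on with
    | _ s ih =>
      intro has hst hcs
      by_cases hprev : s = a ∨ ¬ Sat ρ cond (s - 1)
      · have := hno s ((memT s).mpr ⟨has, hst.trans htb, hcs, hprev⟩)
        omega
      · push_neg at hprev
        obtain ⟨hsa, hcs1⟩ := hprev
        exact ih (s - 1) (by omega) (by omega) (by omega) hcs1
  have hkey : (Triggers cond ρ (a, b) = ∅ ∨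
      ∀ j, sInf (Triggers cond ρ (a, b)) ≤ j → j ≤ b → Sat ρ res j) ↔
      Sat ρ (sio φcore φL) b := by
    constructor
    · intro hsem
      intro _hon
      have hcore : ∀ t, a ≤ t → t ≤ b → Sat ρ φcore t := by
        intro t hat htb
        have noTrigCase : (∀ s ∈ Triggers cond ρ (a, b), t < s) → Sat ρ φcore t := by
          intro hno
          have : Sat ρ (noTriggersFormula cond φL) t := by
            refine ⟨a, hat, Nat.zero_le _, le_top, ⟨nocond t htb hno a le_rfl hat, hL1⟩,
              fun t₁ h1 h2 => nocond t htb hno t₁ (by omega) h2⟩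
          exact Or.inl this
        rcases hsem with hemp | hres'
        · exact noTrigCase (by intro s hs; rw [hemp] at hs; exact absurd hs (Set.notMem_empty s))
        · by_cases hne : (Triggers cond ρ (a, b)).Nonempty
          · have hm := Nat.sInf_mem hne
            obtain ⟨ham, hmb, hcm, hmalt⟩ := (memT (sInf (Triggers cond ρ (a, b)))).mp hm
            by_cases hmt : t < sInf (Triggers cond ρ (a, b))
            · exact noTrigCase (fun s hs => lt_of_lt_of_le hmt (Nat.sInf_le hs))
            · push_neg at hmt
              have htrig : Sat ρ (triggerFormula cond φL) (sInf (Triggers cond ρ (a, b))) := by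
                by_cases hma : sInf (Triggers cond ρ (a, b)) = a
                · exact Or.inr ⟨hcm, by rw [hma]; exact hL1⟩
                · rcases hmalt with h | h
                  · exact absurd h hma
                  · exact Or.inl ⟨hcm, by omega, h⟩
              have : Sat ρ (sir res (triggerFormula cond φL)) t :=
                ⟨sInf (Triggers cond ρ (a, b)), hmt, Nat.zero_le _, le_top,
                  ⟨hres' _ le_rfl hmb, htrig⟩,
                  fun t₁ h1 h2 => hres' t₁ (by omega) (by omega)⟩
              exact Or.inr this
          · exact noTrigCase (fun s hs => absurd ⟨s, hs⟩ hne)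
      exact ⟨a, hI, Nat.zero_le _, le_top, ⟨hcore a le_rfl hI, hL1⟩,
        fun t₁ h1 h2 => hcore t₁ (by omega) h2⟩
    · intro hsat
      have honce : Sat ρ (onceU φL) b := ⟨a, hI, Nat.zero_le _, le_top, hL1⟩
      have hsat' : Sat ρ (sir φcore φL) b := hsat honce
      obtain ⟨t₀, ht₀b, -, -, ⟨hc0, hL0⟩, hrest⟩ := hsat'
      have ht₀a : t₀ ≤ a := by
        by_contra h; exact hL2 t₀ (by omega) hL0
      by_cases hne : (Triggers cond ρ (a, b)).Nonempty
      · right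
        intro j hmj hjb
        have hm := Nat.sInf_mem hne
        obtain ⟨ham, hmb, hcm, -⟩ := (memT (sInf (Triggers cond ρ (a, b)))).mp hm
        have hcj : Sat ρ (noTriggersFormula cond φL) j ∨
            Sat ρ (sir res (triggerFormula cond φL)) j := by
          rcases eq_or_lt_of_le (show t₀ ≤ j by omega) with h | h
          · exact h ▸ hc0
          · exact hrest j h hjb
        rcases hcj with hno | hsir
        · obtain ⟨s, hsj, -, -, ⟨hncs, hLs⟩, hrest'⟩ := hno
          have hsa : s ≤ a := by by_contra h; exact hL2 s (by omega) hLs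
          have hnc : ¬ Sat ρ cond (sInf (Triggers cond ρ (a, b))) := by
            rcases eq_or_lt_of_le (show s ≤ sInf (Triggers cond ρ (a, b)) by omega) with h | h
            · exact h ▸ hncs
            · exact hrest' _ h (by omega)
          exact absurd hcm hnc
        · obtain ⟨s, hsj, -, -, ⟨hress, -⟩, hrest'⟩ := hsir
          rcases eq_or_lt_of_le hsj with h | h
          · exact h ▸ hress
          · exact hrest' j h le_rfl
      · left; exact Set.not_nonempty_iff_eq_empty.mp hne
  refine ⟨fun hlt => ?_, fun heq => ?_⟩
  · have hRb := hR hlt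
    constructor
    · intro hsem _
      exact ⟨Nat.succ_ne_zero b, by simpa using hkey.mp hsem⟩
    · intro h
      have := (h hRb).2
      exact hkey.mpr (by simpa using this)
  · rw [← heq]; exact hkey

end FRET
end

section
/- Correctness of the base formula for timing 'immediately': under the standard endpoint assumptions, the interval I satisfies the timing semantics of 'immediately' — i.e., every t ∈ Triggers(cond, ρ, I) satisfies ρ ⊨ₜ res — if and only if the base formula holds: when ub(I) < n, ρ ⊨_{ub(I)+1} φ_right → 𝒴(SinceInclusiveOptional(triggerFormula(cond, φ_left) → res, φ_left)); when ub(I) = n, ρ ⊨ₙ SinceInclusiveOptional(triggerFormula(cond, φ_left) → res, φ_left). -/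
namespace FRET

variable {α : Type}

/-- Correctness of the base formula for timing 'immediately'. -/
theorem baseform_correct_immediately {α : Type} (ρ : List (Set α)) (I : ℕ × ℕ)
    (cond res φL φR : MTL α)
    (hcond : cond.isBool) (hres : res.isBool)
    (hρ : ρ ≠ []) (hI : I.1 ≤ I.2) (hub : I.2 ≤ ρ.length - 1)
    (hL1 : Sat ρ φL I.1) (hL2 : ∀ s, I.1 < s → ¬ Sat ρ φL s)
    (hR : I.2 < ρ.length - 1 → Sat ρ φR (I.2 + 1)) :
    let n := ρ.length - 1
    let φcore := MTL.imp (triggerFormula cond φL) res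
    let semImmediately := ∀ t ∈ Triggers cond ρ I, Sat ρ res t
    (I.2 < n → (semImmediately ↔ Sat ρ (.imp φR (.prev (sio φcore φL))) (I.2 + 1))) ∧
    (I.2 = n → (semImmediately ↔ Sat ρ (sio φcore φL) n)) := by
  intro n φcore semImmediately
  -- sio at I.2 iff φcore holds on [I.1, I.2]
  have hsio : Sat ρ (sio φcore φL) I.2 ↔ ∀ t, I.1 ≤ t → t ≤ I.2 → Sat ρ φcore t := by
    constructor
    · intro h t h1 h2
      have honce : Sat ρ (onceU φL) I.2 :=
        ⟨I.1, hI, Nat.zero_le _, le_top, hL1⟩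
      obtain ⟨t₀, ht₀u, -, -, ⟨hc0, hl0⟩, hall⟩ := h honce
      have ht₀ : t₀ ≤ I.1 := by
        by_contra hlt
        exact hL2 t₀ (Nat.lt_of_not_le hlt) hl0
      rcases Nat.lt_or_ge t₀ t with hlt | hge
      · exact hall t hlt h2
      · have : t = t₀ := le_antisymm hge (le_trans ht₀ h1)
        exact this ▸ hc0
    · intro h _
      exact ⟨I.1, hI, Nat.zero_le _, le_top, ⟨h I.1 le_rfl hI, hL1⟩,
        fun t₁ h1 h2 => h t₁ (le_of_lt h1) h2⟩
  have hsem : semImmediately ↔ ∀ t, I.1 ≤ t → t ≤ I.2 → Sat ρ φcore t := by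
    constructor
    · intro h t h1 h2 htrig
      rcases htrig with ⟨hc, -, hnc⟩ | ⟨hc, hl⟩
      · exact h t ⟨h1, h2, hc, Or.inr hnc⟩
      · have ht : t = I.1 := by
          by_contra hne
          exact hL2 t (lt_of_le_of_ne h1 (Ne.symm hne)) hl
        exact h t ⟨h1, h2, hc, Or.inl ht⟩
    · rintro h t ⟨h1, h2, hc, hor⟩
      apply h t h1 h2
      rcases hor with ht | hnc
      · exact Or.inr ⟨hc, ht ▸ hL1⟩
      · refine Or.inl ⟨hc, ?_, hnc⟩
        rintro rfl
        exact hnc hc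
  constructor
  · intro hlt
    have hφR : Sat ρ φR (I.2 + 1) := hR hlt
    rw [hsem]
    constructor
    · intro h hr
      exact ⟨Nat.succ_ne_zero _, by simpa using hsio.mpr h⟩
    · intro h
      exact hsio.mp (by simpa using (h hφR).2)
  · intro heq
    rw [hsem, ← heq]
    exact hsio.symm

end FRET
end

section
/- The formula ffim(mode) = fim(mode) ∧ (ftp ∨ 𝒴(Historically(¬mode))) characterizes the first entry into mode: ρ ⊨ₜ ffim(mode) if and only if ⟦mode⟧ρ is nonempty, t = lb((⟦mode⟧ρ)₀), i.e., t is the smallest index at which mode holds in ρ. Moreover, the variant fim(mode) ∧ 𝒴(Historically(¬mode)) (without the ftp disjunct) fails to hold at t = 0 even when mode holds at index 0, so it does not correctly characterize the first entry. -/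
namespace FRET

variable {α : Type}

/-- ffim(mode) characterizes the first entry into mode: it holds at t iff t is the
smallest index at which mode holds in ρ (so the OLI of mode is nonempty and t is the
lower bound of its first interval).  Moreover, the variant without the ftp disjunct,
fim(mode) ∧ 𝒴(Historically(¬mode)), fails at t = 0 even when mode holds at index 0. -/
theorem ffim_iff_first_entry {α : Type} :
    (∀ (ρ : List (Set α)) (mode : MTL α), mode.isBool → ∀ t : ℕ,
      (Sat ρ (ffim mode) t ↔ (Sat ρ mode t ∧ ∀ i < t, ¬ Sat ρ mode i))) ∧
    (∀ (ρ : List (Set α)) (mode : MTL α), mode.isBool → Sat ρ mode 0 →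
      ¬ Sat ρ (.conj (fim mode) (.prev (histU (.neg mode)))) 0) := by
  constructor
  · intro ρ mode _ t
    constructor
    · rintro ⟨⟨hm, _⟩, hd⟩
      refine ⟨hm, fun i hi => ?_⟩
      rcases hd with hftp | ⟨ht, hhist⟩
      · simp [Sat, ftp] at hftp
        omega
      · exact hhist i (by omega) (by omega) le_top
    · rintro ⟨hm, hall⟩
      by_cases ht : t = 0
      · subst ht
        exact ⟨⟨hm, Or.inl (by simp [Sat, ftp])⟩, Or.inl (by simp [Sat, ftp])⟩
      · refine ⟨⟨hm, Or.inr ⟨ht, hall _ (by omega)⟩⟩,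
          Or.inr ⟨ht, fun t₀ h₀ _ _ => hall t₀ (by omega)⟩⟩
  · rintro ρ mode _ _ ⟨_, h, _⟩
    exact h rfl

end FRET
end
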